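/- Let Γ be a group with a finite generating set S and word metric d_S. Suppose there exist constants K₁, K₂, p > 0 such that K₁·R^p ≤ gr(R) ≤ K₂·R^p for all R ≥ 1. Then for every ε ∈ (0,1) there exists N (depending only on K₁, K₂, p and ε) such that for every x ∈ Γ and every R > 0, the ball of radius R centered at x in (Γ, d_S) can be covered by at most N balls of radius εR. -/

import Mathlib

/-- The word length of `g` with respect to the generating set `S`: the least `n` such that
`g` is a product of `n` elements of `S ∪ S⁻¹`. -/
noncomputable def wordLength {G : Type*} [Group G] (S : Set G) (g : G) : ℕ :=
  sInf {n : ℕ | ∃ f : Fin n → G, (∀ i, f i ∈ S ∨ (f i)⁻¹ ∈ S) ∧ (List.ofFn f).prod = g}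

/-- The word metric `d_S(g,h) = |g⁻¹h|_S`. -/
noncomputable def wordDist {G : Type*} [Group G] (S : Set G) (g h : G) : ℕ :=
  wordLength S (g⁻¹ * h)

/-- The growth function `gr(R) = card {g : |g|_S ≤ R}`. -/
noncomputable def growth {G : Type*} [Group G] (S : Set G) (R : ℝ) : ℕ :=
  Set.ncard {g : G | (wordLength S g : ℝ) ≤ R}

section Helpers

variable {G : Type*} [Group G]

lemma mem_repSet_iff {S : Set G} {g : G} {n : ℕ} :
    (n ∈ {n : ℕ | ∃ f : Fin n → G, (∀ i, f i ∈ S ∨ (f i)⁻¹ ∈ S) ∧ (List.ofFn f).prod = g}) ↔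
      ∃ l : List G, l.length = n ∧ (∀ x ∈ l, x ∈ S ∨ x⁻¹ ∈ S) ∧ l.prod = g := by
  constructor
  · rintro ⟨f, hmem, hprod⟩
    refine ⟨List.ofFn f, List.length_ofFn, ?_, hprod⟩
    intro x hx
    obtain ⟨i, rfl⟩ := List.mem_ofFn.mp hx
    exact hmem i
  · rintro ⟨l, rfl, hmem, hprod⟩
    exact ⟨l.get, fun i => hmem _ (l.get_mem i), by rw [List.ofFn_get]; exact hprod⟩

lemma wordLength_le_of_list {S : Set G} {g : G} {l : List G}
    (hmem : ∀ x ∈ l, x ∈ S ∨ x⁻¹ ∈ S) (hprod : l.prod = g) :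
    wordLength S g ≤ l.length :=
  Nat.sInf_le (mem_repSet_iff.mpr ⟨l, rfl, hmem, hprod⟩)

lemma exists_list_rep {S : Set G} (hgen : Subgroup.closure S = ⊤) (g : G) :
    ∃ l : List G, (∀ x ∈ l, x ∈ S ∨ x⁻¹ ∈ S) ∧ l.prod = g := by
  have hg : g ∈ Subgroup.closure S := hgen ▸ Subgroup.mem_top g
  refine Subgroup.closure_induction ?_ ?_ ?_ ?_ hg
  · exact fun x hx => ⟨[x], by simpa using Or.inl hx, by simp⟩
  · exact ⟨[], by simp, rfl⟩
  · rintro x y _ _ ⟨l₁, h₁, p₁⟩ ⟨l₂, h₂, p₂⟩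
    refine ⟨l₁ ++ l₂, ?_, by rw [List.prod_append, p₁, p₂]⟩
    intro a ha
    rcases List.mem_append.mp ha with h | h
    exacts [h₁ a h, h₂ a h]
  · rintro x _ ⟨l, h, pl⟩
    refine ⟨(l.map fun a => a⁻¹).reverse, ?_, by rw [← List.prod_inv_reverse, pl]⟩
    intro a ha
    rw [List.mem_reverse, List.mem_map] at ha
    obtain ⟨b, hb, rfl⟩ := ha
    rcases h b hb with hb' | hb'
    · exact Or.inr (by simpa using hb')
    · exact Or.inl hb'

lemma exists_min_list {S : Set G} (hgen : Subgroup.closure S = ⊤) (g : G) :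
    ∃ l : List G, l.length = wordLength S g ∧ (∀ x ∈ l, x ∈ S ∨ x⁻¹ ∈ S) ∧ l.prod = g := by
  have hne : {n : ℕ | ∃ f : Fin n → G,
      (∀ i, f i ∈ S ∨ (f i)⁻¹ ∈ S) ∧ (List.ofFn f).prod = g}.Nonempty := by
    obtain ⟨l, h1, h2⟩ := exists_list_rep hgen g
    exact ⟨l.length, mem_repSet_iff.mpr ⟨l, rfl, h1, h2⟩⟩
  exact mem_repSet_iff.mp (Nat.sInf_mem hne)

lemma wordLength_one {S : Set G} : wordLength S (1 : G) = 0 :=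
  Nat.le_zero.mp (wordLength_le_of_list (l := []) (by simp) (by simp))

lemma eq_one_of_wordLength_eq_zero {S : Set G} (hgen : Subgroup.closure S = ⊤) {g : G}
    (h : wordLength S g = 0) : g = 1 := by
  obtain ⟨l, hlen, _, hprod⟩ := exists_min_list hgen g
  rw [h, List.length_eq_zero_iff] at hlen
  rw [← hprod, hlen, List.prod_nil]

lemma wordLength_mul_le {S : Set G} (hgen : Subgroup.closure S = ⊤) (g h : G) :
    wordLength S (g * h) ≤ wordLength S g + wordLength S h := by
  obtain ⟨l₁, hl₁, m₁, p₁⟩ := exists_min_list hgen g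
  obtain ⟨l₂, hl₂, m₂, p₂⟩ := exists_min_list hgen h
  have := wordLength_le_of_list (S := S) (g := g * h) (l := l₁ ++ l₂)
    (by intro a ha; rcases List.mem_append.mp ha with h | h
        exacts [m₁ a h, m₂ a h])
    (by rw [List.prod_append, p₁, p₂])
  simpa [hl₁, hl₂] using this

lemma wordLength_inv_le {S : Set G} (hgen : Subgroup.closure S = ⊤) (g : G) :
    wordLength S g⁻¹ ≤ wordLength S g := by
  obtain ⟨l, hl, m, pl⟩ := exists_min_list hgen g
  have := wordLength_le_of_list (S := S) (g := g⁻¹) (l := (l.map fun a => a⁻¹).reverse)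
    (by intro a ha
        rw [List.mem_reverse, List.mem_map] at ha
        obtain ⟨b, hb, rfl⟩ := ha
        rcases m b hb with hb' | hb'
        · exact Or.inr (by simpa using hb')
        · exact Or.inl hb')
    (by rw [← List.prod_inv_reverse, pl])
  simpa [hl] using this

lemma wordLength_inv {S : Set G} (hgen : Subgroup.closure S = ⊤) (g : G) :
    wordLength S g⁻¹ = wordLength S g :=
  le_antisymm (wordLength_inv_le hgen g)
    (by simpa using wordLength_inv_le hgen g⁻¹)

lemma wordDist_self {S : Set G} (x : G) : wordDist S x x = 0 := by
  simp [wordDist, wordLength_one]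

lemma wordDist_symm {S : Set G} (hgen : Subgroup.closure S = ⊤) (x y : G) :
    wordDist S x y = wordDist S y x := by
  have : (x⁻¹ * y)⁻¹ = y⁻¹ * x := by group
  rw [wordDist, wordDist, ← this, wordLength_inv hgen]

lemma wordDist_triangle {S : Set G} (hgen : Subgroup.closure S = ⊤) (x y z : G) :
    wordDist S x z ≤ wordDist S x y + wordDist S y z := by
  have : (x⁻¹ * y) * (y⁻¹ * z) = x⁻¹ * z := by group
  simpa [wordDist, this] using wordLength_mul_le hgen (x⁻¹ * y) (y⁻¹ * z)

lemma eq_of_wordDist_eq_zero {S : Set G} (hgen : Subgroup.closure S = ⊤) {x y : G}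
    (h : wordDist S x y = 0) : x = y := by
  have := eq_one_of_wordLength_eq_zero hgen h
  rw [inv_mul_eq_one] at this
  exact this

lemma natBall_finite (S : Finset G) (hgen : Subgroup.closure (S : Set G) = ⊤) (n : ℕ) :
    {g : G | wordLength (S : Set G) g ≤ n}.Finite := by
  classical
  let T : Finset G := S ∪ S.image (·⁻¹)
  have hsub : {g : G | wordLength (S : Set G) g ≤ n} ⊆
      ↑((Finset.range (n + 1)).biUnion fun m =>
        (Finset.univ : Finset (Fin m → {x // x ∈ T})).image
          fun f => (List.ofFn fun i => ((f i : G))).prod) := by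
    intro g hg
    obtain ⟨l, hlen, hm, hprod⟩ := exists_min_list hgen g
    have hln : l.length ≤ n := hlen ▸ hg
    simp only [Finset.coe_biUnion, Finset.mem_coe, Finset.mem_range, Set.mem_iUnion,
      Finset.mem_image, Finset.mem_univ, true_and]
    refine ⟨l.length, by omega, fun i => ⟨l.get i, ?_⟩, ?_⟩
    · rcases hm _ (l.get_mem i) with h | h
      · exact Finset.mem_union_left _ h
      · exact Finset.mem_union_right _ (Finset.mem_image.mpr ⟨_, h, by simp⟩)
    · rw [List.ofFn_get]; exact hprod
  exact Set.Finite.subset (Finset.finite_toSet _) hsub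

lemma ballR_finite (S : Finset G) (hgen : Subgroup.closure (S : Set G) = ⊤) (r : ℝ) :
    {g : G | (wordLength (S : Set G) g : ℝ) ≤ r}.Finite := by
  refine (natBall_finite S hgen ⌊r⌋₊).subset ?_
  intro g hg
  exact Nat.le_floor hg

lemma ball_eq_image (S : Set G) (x : G) (r : ℝ) :
    {g : G | (wordDist S x g : ℝ) ≤ r} = (fun h => x * h) '' {g : G | (wordLength S g : ℝ) ≤ r} := by
  ext g
  constructor
  · intro hg
    exact ⟨x⁻¹ * g, hg, by group⟩
  · rintro ⟨h, hh, rfl⟩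
    simpa [wordDist, inv_mul_cancel_left] using hh

lemma ncard_ball (S : Set G) (x : G) (r : ℝ) :
    {g : G | (wordDist S x g : ℝ) ≤ r}.ncard = growth S r := by
  rw [ball_eq_image, Set.ncard_image_of_injective _ (mul_right_injective x)]
  rfl

lemma growth_mono (S : Finset G) (hgen : Subgroup.closure (S : Set G) = ⊤) {r r' : ℝ}
    (h : r ≤ r') : growth (S : Set G) r ≤ growth (S : Set G) r' :=
  Set.ncard_le_ncard (fun g hg => le_trans hg h) (ballR_finite S hgen r')

end Helpers

/-- Quantitative converse direction of Lemma 1.1: two-sided polynomial bounds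
`K₁·R^p ≤ gr(R) ≤ K₂·R^p` on the growth function imply the covering property A1: for every
`ε ∈ (0,1)` there is `N` such that every ball of radius `R` of the word metric can be covered
by at most `N` balls of radius `εR`. -/
theorem covering_of_two_sided_growth {G : Type*} [Group G] (S : Finset G)
    (hgen : Subgroup.closure (S : Set G) = ⊤)
    (K₁ K₂ p : ℝ) (hK₁ : 0 < K₁) (hK₂ : 0 < K₂) (hp : 0 < p)
    (hlow : ∀ R : ℝ, 1 ≤ R → K₁ * R ^ p ≤ (growth (S : Set G) R : ℝ))
    (hup : ∀ R : ℝ, 1 ≤ R → (growth (S : Set G) R : ℝ) ≤ K₂ * R ^ p) :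
    ∀ ε : ℝ, 0 < ε → ε < 1 → ∃ N : ℕ, ∀ (x : G) (R : ℝ), 0 < R →
      ∃ C : Finset G, C.card ≤ N ∧
        ∀ g : G, (wordDist (S : Set G) x g : ℝ) ≤ R →
          ∃ c ∈ C, (wordDist (S : Set G) c g : ℝ) ≤ ε * R := by
  classical
  intro ε hε hε1
  refine ⟨⌈(K₂ / K₁ + K₂) * (4 / ε) ^ p⌉₊, ?_⟩
  intro x R hR
  have hεR : 0 < ε * R := mul_pos hε hR
  have hfin : ∀ (c : G) (r : ℝ), {g : G | (wordDist (S : Set G) c g : ℝ) ≤ r}.Finite := by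
    intro c r
    rw [ball_eq_image]
    exact (ballR_finite S hgen r).image _
  have h4ε : (0 : ℝ) < 4 / ε := by positivity
  have hKsum : K₂ ≤ K₂ / K₁ + K₂ := by nlinarith [div_pos hK₂ hK₁]
  have hKK : K₂ * (4 / ε) ^ p ≤ (K₂ / K₁ + K₂) * (4 / ε) ^ p :=
    mul_le_mul_of_nonneg_right hKsum (Real.rpow_nonneg h4ε.le p)
  have hKK' : K₂ / K₁ * (4 / ε) ^ p ≤ (K₂ / K₁ + K₂) * (4 / ε) ^ p :=
    mul_le_mul_of_nonneg_right (by linarith) (Real.rpow_nonneg h4ε.le p)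
  by_cases hcase : ε * R < 2
  · -- small radius: take the full ball as the covering set
    refine ⟨(hfin x R).toFinset, ?_, ?_⟩
    · have hcard : (hfin x R).toFinset.card = growth (S : Set G) R := by
        rw [← Set.ncard_eq_toFinset_card _ (hfin x R)]
        exact ncard_ball _ x R
      have hR2ε : R ≤ 2 / ε := by
        rw [le_div_iff₀ hε]
        nlinarith
      have h1 : (1 : ℝ) ≤ 2 / ε := by
        rw [le_div_iff₀ hε]; linarith
      have hmono : growth (S : Set G) R ≤ growth (S : Set G) (2 / ε) :=
        growth_mono S hgen hR2ε
      have hgr : (growth (S : Set G) (2 / ε) : ℝ) ≤ K₂ * (4 / ε) ^ p := by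
        refine le_trans (hup _ h1) ?_
        refine mul_le_mul_of_nonneg_left ?_ hK₂.le
        exact Real.rpow_le_rpow (by positivity) (by gcongr <;> norm_num) hp.le
      have : (growth (S : Set G) R : ℝ) ≤ ((⌈(K₂ / K₁ + K₂) * (4 / ε) ^ p⌉₊ : ℕ) : ℝ) := by
        refine le_trans ?_ (Nat.le_ceil _)
        exact le_trans (by exact_mod_cast hmono) (le_trans hgr hKK)
      rw [hcard]
      exact_mod_cast this
    · intro g hg
      refine ⟨g, (hfin x R).mem_toFinset.mpr hg, ?_⟩
      rw [wordDist_self]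
      push_cast
      linarith
  · -- large radius: packing argument
    push_neg at hcase
    have hR2 : 2 < R := by nlinarith
    set t : ℝ := ε * R / 2 with ht
    have ht1 : (1 : ℝ) ≤ t := by rw [ht]; linarith
    have htR : t ≤ R := by rw [ht]; nlinarith
    have htpos : (0 : ℝ) < t := by linarith
    set B := (hfin x R).toFinset with hB
    haveI : DecidablePred (fun C : Finset G => ∀ c ∈ C, ∀ c' ∈ C, c ≠ c' →
        ε * R < (wordDist (S : Set G) c c' : ℝ)) := fun _ => Classical.propDecidable _
    obtain ⟨C, hCF, hCmax⟩ := Finset.exists_max_image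
      (B.powerset.filter
        (fun C => ∀ c ∈ C, ∀ c' ∈ C, c ≠ c' → ε * R < (wordDist (S : Set G) c c' : ℝ)))
      Finset.card ⟨∅, by simp⟩
    obtain ⟨hCB0, hsep⟩ := Finset.mem_filter.mp hCF
    have hCB := Finset.mem_powerset.mp hCB0
    refine ⟨C, ?_, ?_⟩
    · -- cardinality bound via disjoint small balls
      have hdisj : ∀ c ∈ C, ∀ c' ∈ C, c ≠ c' →
          Disjoint ((hfin c t).toFinset) ((hfin c' t).toFinset) := by
        intro c hc c' hc' hne
        rw [Finset.disjoint_left]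
        intro a ha ha'
        rw [Set.Finite.mem_toFinset] at ha ha'
        have h1 : (wordDist (S : Set G) c c' : ℝ) ≤
            (wordDist (S : Set G) c a : ℝ) + (wordDist (S : Set G) a c' : ℝ) := by
          exact_mod_cast wordDist_triangle hgen c a c'
        have h2 : (wordDist (S : Set G) a c' : ℝ) = (wordDist (S : Set G) c' a : ℝ) :=
          Nat.cast_inj.mpr (wordDist_symm hgen a c')
        have h3 := hsep c hc c' hc' hne
        rw [h2] at h1
        simp only [Set.mem_setOf_eq, ht] at ha ha'
        linarith
      have hsubsets : ∀ c ∈ C, (hfin c t).toFinset ⊆ (hfin x (R + t)).toFinset := by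
        intro c hc a ha
        rw [Set.Finite.mem_toFinset] at ha ⊢
        simp only [Set.mem_setOf_eq] at ha ⊢
        have hcB : (wordDist (S : Set G) x c : ℝ) ≤ R := by
          have := hCB hc
          rw [hB, Set.Finite.mem_toFinset] at this
          exact this
        have h1 : (wordDist (S : Set G) x a : ℝ) ≤
            (wordDist (S : Set G) x c : ℝ) + (wordDist (S : Set G) c a : ℝ) := by
          exact_mod_cast wordDist_triangle hgen x c a
        exact le_trans h1 (by linarith)
      have hcards : ∀ c ∈ C, ((hfin c t).toFinset).card = growth (S : Set G) t := by
        intro c _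
        rw [← Set.ncard_eq_toFinset_card _ (hfin c t)]
        exact ncard_ball _ c t
      have hcount : C.card * growth (S : Set G) t ≤ growth (S : Set G) (R + t) := by
        have h1 : (C.biUnion fun c => (hfin c t).toFinset).card =
            ∑ c ∈ C, ((hfin c t).toFinset).card := Finset.card_biUnion hdisj
        have h2 : ∑ c ∈ C, ((hfin c t).toFinset).card = C.card * growth (S : Set G) t := by
          rw [Finset.sum_congr rfl hcards, Finset.sum_const, smul_eq_mul]
        have h3 : (C.biUnion fun c => (hfin c t).toFinset) ⊆ (hfin x (R + t)).toFinset :=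
          Finset.biUnion_subset.mpr hsubsets
        have h4 : ((hfin x (R + t)).toFinset).card = growth (S : Set G) (R + t) := by
          rw [← Set.ncard_eq_toFinset_card _ (hfin x (R + t))]
          exact ncard_ball _ x (R + t)
        have h5 := Finset.card_le_card h3
        rw [h1, h2, h4] at h5
        exact h5
      have hgt : K₁ * t ^ p ≤ (growth (S : Set G) t : ℝ) := hlow t ht1
      have hgR : (growth (S : Set G) (R + t) : ℝ) ≤ K₂ * (2 * R) ^ p := by
        have hm : growth (S : Set G) (R + t) ≤ growth (S : Set G) (2 * R) :=
          growth_mono S hgen (by linarith)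
        refine le_trans ?_ (hup (2 * R) (by linarith))
        exact_mod_cast hm
      have hCbd : (C.card : ℝ) * (K₁ * t ^ p) ≤ K₂ * (2 * R) ^ p := by
        calc (C.card : ℝ) * (K₁ * t ^ p) ≤ (C.card : ℝ) * (growth (S : Set G) t : ℝ) :=
              mul_le_mul_of_nonneg_left hgt (Nat.cast_nonneg _)
          _ ≤ (growth (S : Set G) (R + t) : ℝ) := by exact_mod_cast hcount
          _ ≤ K₂ * (2 * R) ^ p := hgR
      have htp : (0 : ℝ) < K₁ * t ^ p := mul_pos hK₁ (Real.rpow_pos_of_pos htpos p)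
      have hCle : (C.card : ℝ) ≤ K₂ / K₁ * (4 / ε) ^ p := by
        have h5 : (C.card : ℝ) ≤ K₂ * (2 * R) ^ p / (K₁ * t ^ p) :=
          (le_div_iff₀ htp).mpr hCbd
        have h6 : (2 * R) / t = 4 / ε := by
          rw [ht]
          field_simp
          ring
        have h7 : ((2 * R : ℝ)) ^ p / t ^ p = (4 / ε) ^ p := by
          rw [← Real.div_rpow (by linarith) htpos.le, h6]
        have h8 : K₂ * (2 * R) ^ p / (K₁ * t ^ p) = K₂ / K₁ * ((2 * R) ^ p / t ^ p) :=
          (div_mul_div_comm K₂ K₁ ((2 * R) ^ p) (t ^ p)).symm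
        rw [h8, h7] at h5
        exact h5
      have : (C.card : ℝ) ≤ ((⌈(K₂ / K₁ + K₂) * (4 / ε) ^ p⌉₊ : ℕ) : ℝ) :=
        le_trans hCle (le_trans hKK' (Nat.le_ceil _))
      exact_mod_cast this
    · -- covering property by maximality
      intro g hg
      by_contra hcon
      push_neg at hcon
      have hgB : g ∈ B := (hfin x R).mem_toFinset.mpr hg
      have hgC : g ∉ C := by
        intro h
        have := hcon g h
        rw [wordDist_self] at this
        push_cast at this
        linarith
      have hsep' : ∀ c ∈ insert g C, ∀ c' ∈ insert g C, c ≠ c' →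
          ε * R < (wordDist (S : Set G) c c' : ℝ) := by
        intro c hc c' hc' hne
        rcases Finset.mem_insert.mp hc with h1 | h1 <;>
          rcases Finset.mem_insert.mp hc' with h2 | h2
        · exact absurd (h1.trans h2.symm) hne
        · rw [h1, Nat.cast_inj.mpr (wordDist_symm hgen g c')]
          exact hcon c' h2
        · rw [h2]
          exact hcon c h1
        · exact hsep c h1 c' h2 hne
      have hle := hCmax (insert g C)
        (Finset.mem_filter.mpr ⟨Finset.mem_powerset.mpr (Finset.insert_subset hgB hCB), hsep'⟩)
      rw [Finset.card_insert_of_notMem hgC] at hle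
      omega
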